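/- arXiv:2505.09312 — 2 statements merged into one kernel-verified Lean document; each statement's English description precedes it below -/
import Mathlib

section
/- Let u : [0,1]^d → [0,∞) be integrable with ‖u‖₁ := ∫_{[0,1]^d} u(y) dy ∈ (0,∞). For points x₁,…,xₙ ∈ [0,1]^d with ∑ᵢ u(xᵢ) > 0, define weights ωⱼᵘ = u(xⱼ)/∑ᵢ u(xᵢ) and the measure π(A) = ∫_A u dx / ‖u‖₁. Then for every z ∈ [0,1]^d, |∑ⱼ ωⱼᵘ 1_{[0,z]}(xⱼ) − π([0,z])| ≤ (1/‖u‖₁)(|‖u‖₁ − (1/n)∑ᵢ u(xᵢ)| + |(1/n)∑ᵢ u(xᵢ)1_{[0,z]}(xᵢ) − ∫_{[0,z]} u dx|). -/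
open MeasureTheory Classical

/-- weighted local discrepancy bound. -/
theorem stmt_0 (d n : ℕ) (hn : 0 < n)
    (u : (Fin d → ℝ) → ℝ)
    (hu0 : ∀ y, 0 ≤ u y)
    (huint : IntegrableOn u (Set.Icc (0 : Fin d → ℝ) 1))
    (hI : 0 < ∫ y in Set.Icc (0 : Fin d → ℝ) 1, u y)
    (x : Fin n → (Fin d → ℝ))
    (hx : ∀ i, x i ∈ Set.Icc (0 : Fin d → ℝ) 1)
    (hS : 0 < ∑ i, u (x i))
    (z : Fin d → ℝ) (hz : z ∈ Set.Icc (0 : Fin d → ℝ) 1) :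
    |(∑ j, (u (x j) / ∑ i, u (x i)) * (if x j ∈ Set.Icc 0 z then (1 : ℝ) else 0))
        - (∫ y in Set.Icc (0 : Fin d → ℝ) z, u y) / (∫ y in Set.Icc (0 : Fin d → ℝ) 1, u y)|
    ≤ (1 / ∫ y in Set.Icc (0 : Fin d → ℝ) 1, u y) *
        (|(∫ y in Set.Icc (0 : Fin d → ℝ) 1, u y) - (1 / n) * ∑ i, u (x i)|
        + |(1 / n) * (∑ i, u (x i) * (if x i ∈ Set.Icc 0 z then (1 : ℝ) else 0))
            - ∫ y in Set.Icc (0 : Fin d → ℝ) z, u y|) := by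
  set I := ∫ y in Set.Icc (0 : Fin d → ℝ) 1, u y with hIdef
  set J := ∫ y in Set.Icc (0 : Fin d → ℝ) z, u y with hJdef
  set S := ∑ i, u (x i) with hSdef
  set T := ∑ i, u (x i) * (if x i ∈ Set.Icc 0 z then (1 : ℝ) else 0) with hTdef
  have hsum : (∑ j, (u (x j) / S) * (if x j ∈ Set.Icc 0 z then (1 : ℝ) else 0)) = T / S := by
    rw [hTdef, Finset.sum_div]
    exact Finset.sum_congr rfl fun j _ => by ring
  rw [hsum]
  have hn' : (0 : ℝ) < (n : ℝ) := by exact_mod_cast hn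
  have hT0 : 0 ≤ T := Finset.sum_nonneg fun i _ => by
    have := hu0 (x i); positivity
  have hTS : T ≤ S := Finset.sum_le_sum fun i _ => by
    by_cases h : x i ∈ Set.Icc (0 : Fin d → ℝ) z
    · simp [h]
    · simp [h, hu0 (x i)]
  have hratio0 : 0 ≤ T / S := div_nonneg hT0 hS.le
  have hratio1 : T / S ≤ 1 := (div_le_one hS).2 hTS
  have key : T / S - J / I = (1 / I) * ((T / S) * (I - (1 / n) * S) + ((1 / n) * T - J)) := by
    field_simp
    ring
  rw [key, abs_mul, abs_of_pos (by positivity : (0:ℝ) < 1 / I)]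
  gcongr
  calc |(T / S) * (I - (1 / n) * S) + ((1 / n) * T - J)|
      ≤ |(T / S) * (I - (1 / n) * S)| + |(1 / n) * T - J| := abs_add_le _ _
    _ ≤ |I - (1 / n) * S| + |(1 / n) * T - J| := by
        rw [abs_mul, abs_of_nonneg hratio0]
        exact add_le_add_left (mul_le_of_le_one_left (abs_nonneg _) hratio1) _
end

section
/- Let Ω = {Ω₁,…,Ω_N} be an equal-volume partition of [0,1]^d such that for every anchored box R = [0,z), the number of cells intersecting ∂R (but not contained in R) is at most M. Let xᵢ be independent with xᵢ uniform on Ωᵢ. Then for 2 ≤ p < ∞ (p an even integer suffices), the expected L_p-discrepancy satisfies E[L_p^p(D_N, x)] ≤ C_p · M^{p/2} / N^p, where L_p^p(D_N,x) = ∫_{[0,1]^d} |(1/N)∑ᵢ 1_{[0,z)}(xᵢ) − λ_d([0,z))|^p dz. -/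
open MeasureTheory Classical

open ProbabilityTheory Finset in
lemma lemA {S : Type} [MeasureSpace S] [IsProbabilityMeasure (volume : Measure S)]
    {ι : Type*} (η : ι → S → ℝ) (hmeas : ∀ i, Measurable (η i))
    (hind : iIndepFun η volume) (t : Finset ι) :
    ∫ s, ∏ i ∈ t, η i s = ∏ i ∈ t, ∫ s, η i s := by
  classical
  induction t using Finset.cons_induction with
  | empty => simp
  | cons i t hi ih =>
    simp only [Finset.prod_cons]
    have hIF : IndepFun (η i) (∏ j ∈ t, η j) volume :=
      (hind.indepFun_finsetProd_of_notMem hmeas hi).symm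
    have hm2 : AEStronglyMeasurable (∏ j ∈ t, η j) (volume : Measure S) := by
      have : Measurable (fun s => ∏ j ∈ t, η j s) := Finset.measurable_prod t fun j _ => hmeas j
      simpa [Finset.prod_fn] using this.aestronglyMeasurable
    have h1 := hIF.integral_mul_eq_mul_integral (hmeas i).aestronglyMeasurable hm2
    have e1 : (∫ s, η i s * ∏ j ∈ t, η j s) = integral volume (η i * ∏ j ∈ t, η j) := by
      congr 1; ext s; simp [Finset.prod_apply]
    have e2 : (∫ s, ∏ j ∈ t, η j s) = integral volume (∏ j ∈ t, η j) := by
      congr 1; ext s; simp [Finset.prod_apply]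
    rw [e1, h1, ← e2, ih]

open ProbabilityTheory Finset in
lemma lemC {N k : ℕ} (hk : 1 ≤ k) (B : Finset (Fin N)) :
    ((Fintype.piFinset (fun _ : Fin (2*k) => B)).filter
      (fun p => ∀ i ∈ Finset.image p Finset.univ,
        2 ≤ (Finset.univ.filter (fun j => p j = i)).card)).card
      ≤ k ^ (2*k) * B.card ^ k := by
  classical
  set G := ((Fintype.piFinset (fun _ : Fin (2*k) => B)).filter
      (fun p => ∀ i ∈ Finset.image p Finset.univ,
        2 ≤ (Finset.univ.filter (fun j => p j = i)).card)) with hG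
  have h2k : 0 < 2 * k := by omega
  have hsub : G ⊆ Finset.image
      (fun q : (Fin (2*k) → Fin k) × (Fin k → {x // x ∈ B}) => fun j => (q.2 (q.1 j) : Fin N))
      Finset.univ := by
    intro p hp
    rw [hG, Finset.mem_filter] at hp
    obtain ⟨hpi, hgood⟩ := hp
    have hmem : ∀ j, p j ∈ B := by
      intro j; exact Fintype.mem_piFinset.mp hpi j
    set m := Finset.image p Finset.univ with hm
    have hmB : ∀ x ∈ m, x ∈ B := by
      intro x hx; obtain ⟨j, _, rfl⟩ := Finset.mem_image.mp hx; exact hmem j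
    -- card m ≤ k
    have hcard : m.card ≤ k := by
      have h1 : (Finset.univ : Finset (Fin (2*k))).card
          = ∑ i ∈ m, (Finset.univ.filter (fun j => p j = i)).card :=
        Finset.card_eq_sum_card_fiberwise (fun j _ => Finset.mem_image_of_mem p (mem_univ j))
      have h2 : ∑ i ∈ m, 2 ≤ ∑ i ∈ m, (Finset.univ.filter (fun j => p j = i)).card :=
        Finset.sum_le_sum hgood
      simp only [Finset.sum_const, smul_eq_mul, Finset.card_univ, Fintype.card_fin] at h1 h2
      omega
    have E := m.equivFin
    have hj0 : (0 : ℕ) < 2 * k := h2k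
    refine Finset.mem_image.mpr ⟨(⟨fun j => ⟨(E ⟨p j, Finset.mem_image_of_mem p (mem_univ j)⟩ : Fin m.card),
        lt_of_lt_of_le (Fin.is_lt _) hcard⟩,
      fun i => if h : (i : ℕ) < m.card then ⟨(E.symm ⟨(i : ℕ), h⟩ : m), hmB _ (E.symm ⟨(i : ℕ), h⟩).2⟩
        else ⟨p ⟨0, hj0⟩, hmem _⟩⟩), mem_univ _, ?_⟩
    funext j
    simp only
    have hlt : ((E ⟨p j, Finset.mem_image_of_mem p (mem_univ j)⟩ : Fin m.card) : ℕ) < m.card :=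
      Fin.is_lt _
    rw [dif_pos hlt]
    have : (⟨((E ⟨p j, Finset.mem_image_of_mem p (mem_univ j)⟩ : Fin m.card) : ℕ), hlt⟩ : Fin m.card)
        = E ⟨p j, Finset.mem_image_of_mem p (mem_univ j)⟩ := by
      apply Fin.ext; rfl
    rw [this, Equiv.symm_apply_apply]
  calc G.card ≤ _ := Finset.card_le_card hsub
    _ ≤ (Finset.univ : Finset ((Fin (2*k) → Fin k) × (Fin k → {x // x ∈ B}))).card :=
        Finset.card_image_le
    _ = k ^ (2*k) * B.card ^ k := by
        simp [Fintype.card_fun, Fintype.card_coe]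

open ProbabilityTheory Finset in
lemma lemB {S : Type} [MeasureSpace S] [IsProbabilityMeasure (volume : Measure S)]
    {N : ℕ} (k : ℕ) (hk : 1 ≤ k) (ξ : Fin N → S → ℝ)
    (hmeas : ∀ i, Measurable (ξ i)) (hbdd : ∀ i s, |ξ i s| ≤ 1)
    (hcent : ∀ i, ∫ s, ξ i s = 0)
    (hind : iIndepFun ξ volume)
    (B : Finset (Fin N)) (hzero : ∀ i ∉ B, ∀ s, ξ i s = 0) :
    ∫ s, (∑ i, ξ i s) ^ (2*k) ≤ (k : ℝ) ^ (2*k) * (B.card : ℝ) ^ k := by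
  classical
  have hsum : ∀ s : S, ∑ i, ξ i s = ∑ i ∈ B, ξ i s := fun s =>
    (Finset.sum_subset (Finset.subset_univ B) (fun i _ hi => hzero i hi s)).symm
  have hexp : ∀ s : S, (∑ i, ξ i s) ^ (2*k)
      = ∑ p ∈ Fintype.piFinset (fun _ : Fin (2*k) => B), ∏ j, ξ (p j) s := by
    intro s; rw [hsum s, Finset.sum_pow']
  simp_rw [hexp]
  have hprodmeas : ∀ p : Fin (2*k) → Fin N, Measurable (fun s => ∏ j, ξ (p j) s) :=
    fun p => Finset.measurable_prod _ fun j _ => hmeas (p j)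
  have hprodbdd : ∀ (p : Fin (2*k) → Fin N) (s : S), |∏ j, ξ (p j) s| ≤ 1 := by
    intro p s
    rw [Finset.abs_prod]
    exact Finset.prod_le_one (fun j _ => abs_nonneg _) (fun j _ => hbdd (p j) s)
  have hint : ∀ p : Fin (2*k) → Fin N, Integrable (fun s => ∏ j, ξ (p j) s) volume := by
    intro p
    exact (integrable_const (1:ℝ)).mono' (hprodmeas p).aestronglyMeasurable
      (Filter.Eventually.of_forall fun s => by
        rw [Real.norm_eq_abs]; exact hprodbdd p s)
  rw [integral_finset_sum _ (fun p _ => hint p)]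
  have hterm : ∀ p ∈ Fintype.piFinset (fun _ : Fin (2*k) => B),
      (∫ s, ∏ j, ξ (p j) s) ≤ if (∀ i ∈ Finset.image p Finset.univ,
        2 ≤ (Finset.univ.filter (fun j => p j = i)).card) then (1:ℝ) else 0 := by
    intro p _
    have hfact : (∫ s, ∏ j, ξ (p j) s)
        = ∏ i ∈ Finset.image p Finset.univ,
            ∫ s, ξ i s ^ (Finset.univ.filter (fun j => p j = i)).card := by
      have e : ∀ s : S, ∏ j, ξ (p j) s
          = ∏ i ∈ Finset.image p Finset.univ,
              (fun i s => ξ i s ^ (Finset.univ.filter (fun j => p j = i)).card) i s := by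
        intro s
        exact Finset.prod_comp (fun i => ξ i s) p
      simp_rw [e]
      exact lemA _ (fun i => (hmeas i).pow_const _)
        (hind.comp _ (fun i => measurable_id.pow_const _)) _
    rw [hfact]
    by_cases hg : ∀ i ∈ Finset.image p Finset.univ,
        2 ≤ (Finset.univ.filter (fun j => p j = i)).card
    · rw [if_pos hg]
      have hpow1 : ∀ (i : Fin N) (n : ℕ) (s : S), |ξ i s ^ n| ≤ 1 := by
        intro i n s
        rw [abs_pow]
        exact pow_le_one₀ (abs_nonneg _) (hbdd i s)
      have habs : ∀ i ∈ Finset.image p Finset.univ,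
          |∫ s, ξ i s ^ (Finset.univ.filter (fun j => p j = i)).card| ≤ 1 := by
        intro i _
        set n := (Finset.univ.filter (fun j => p j = i)).card
        have h1 : |∫ s, ξ i s ^ n| ≤ ∫ s, |ξ i s ^ n| := by
          simpa [Real.norm_eq_abs] using
            norm_integral_le_integral_norm (μ := (volume : Measure S)) (fun s => ξ i s ^ n)
        have hintabs : Integrable (fun s => |ξ i s ^ n|) volume :=
          (integrable_const (1:ℝ)).mono' ((hmeas i).pow_const n).abs.aestronglyMeasurable
            (Filter.Eventually.of_forall fun s => by
              rw [Real.norm_eq_abs, abs_abs]; exact hpow1 i n s)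
        have h2 : (∫ s, |ξ i s ^ n|) ≤ ∫ s, (1:ℝ) :=
          integral_mono hintabs (integrable_const 1) (fun s => hpow1 i n s)
        have h3 : (∫ s : S, (1:ℝ)) = 1 := by simp
        linarith
      calc ∏ i ∈ Finset.image p Finset.univ, ∫ s, ξ i s ^ (Finset.univ.filter (fun j => p j = i)).card
          ≤ |∏ i ∈ Finset.image p Finset.univ, ∫ s, ξ i s ^ (Finset.univ.filter (fun j => p j = i)).card| :=
            le_abs_self _
        _ = ∏ i ∈ Finset.image p Finset.univ, |∫ s, ξ i s ^ (Finset.univ.filter (fun j => p j = i)).card| :=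
            Finset.abs_prod _ _
        _ ≤ ∏ i ∈ Finset.image p Finset.univ, (1:ℝ) :=
            Finset.prod_le_prod (fun i _ => abs_nonneg _) habs
        _ = 1 := by simp
    · rw [if_neg hg]
      push_neg at hg
      obtain ⟨i0, hi0mem, hi0⟩ := hg
      have h1 : 1 ≤ (Finset.univ.filter (fun j => p j = i0)).card := by
        obtain ⟨j, _, rfl⟩ := Finset.mem_image.mp hi0mem
        apply Finset.card_pos.mpr
        exact ⟨j, Finset.mem_filter.mpr ⟨mem_univ j, rfl⟩⟩
      have hcard1 : (Finset.univ.filter (fun j => p j = i0)).card = 1 := by omega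
      apply le_of_eq
      apply Finset.prod_eq_zero hi0mem
      rw [hcard1]
      simpa using hcent i0
  calc ∑ p ∈ Fintype.piFinset (fun _ : Fin (2*k) => B), ∫ s, ∏ j, ξ (p j) s
      ≤ ∑ p ∈ Fintype.piFinset (fun _ : Fin (2*k) => B),
          if (∀ i ∈ Finset.image p Finset.univ,
            2 ≤ (Finset.univ.filter (fun j => p j = i)).card) then (1:ℝ) else 0 :=
        Finset.sum_le_sum hterm
    _ = (((Fintype.piFinset (fun _ : Fin (2*k) => B)).filter
          (fun p => ∀ i ∈ Finset.image p Finset.univ,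
            2 ≤ (Finset.univ.filter (fun j => p j = i)).card)).card : ℝ) := by
        rw [Finset.sum_ite, Finset.sum_const, Finset.sum_const]; simp
    _ ≤ ((k ^ (2*k) * B.card ^ k : ℕ) : ℝ) :=
        Nat.cast_le.mpr (lemC hk B)
    _ = (k : ℝ) ^ (2*k) * (B.card : ℝ) ^ k := by push_cast; ring

open ProbabilityTheory Finset in
lemma lemD (k : ℕ) (hk : 1 ≤ k) (d N M : ℕ) (hN : 0 < N)
    (Ω : Fin N → Set (Fin d → ℝ))
    (hΩmeas : ∀ i, MeasurableSet (Ω i))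
    (hΩdisj : Pairwise (Function.onFun Disjoint Ω))
    (hΩunion : ⋃ i, Ω i = Set.Icc (0 : Fin d → ℝ) 1)
    (hΩvol : ∀ i, volume (Ω i) = 1 / N)
    (S : Type) (_ : MeasureSpace S) (hPS : IsProbabilityMeasure (volume : Measure S))
    (X : Fin N → S → (Fin d → ℝ))
    (hXmeas : ∀ i, Measurable (X i))
    (hXmem : ∀ i s, X i s ∈ Ω i)
    (hXdist : ∀ i, Measure.map (X i) volume = (N : ENNReal) • volume.restrict (Ω i))
    (hXind : ProbabilityTheory.iIndepFun X volume)
    (z : Fin d → ℝ) (hz : z ∈ Set.Icc (0 : Fin d → ℝ) 1)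
    (hM : ((Finset.univ.filter (fun i =>
            (Ω i ∩ Set.univ.pi (fun j => Set.Ico 0 (z j))).Nonempty ∧
            ¬ Ω i ⊆ Set.univ.pi (fun j => Set.Ico 0 (z j)))).card ≤ M)) :
    ∫ s, |(1 / N) * (∑ i, if X i s ∈ Set.univ.pi (fun j => Set.Ico 0 (z j))
                then (1 : ℝ) else 0)
              - (volume (Set.univ.pi (fun j => Set.Ico 0 (z j)))).toReal| ^ (2 * k)
      ≤ (k : ℝ) ^ (2*k) * (M : ℝ) ^ k / (N : ℝ) ^ (2*k) := by
  classical
  set box : Set (Fin d → ℝ) := Set.univ.pi (fun j => Set.Ico 0 (z j)) with hbox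
  have hboxmeas : MeasurableSet box := MeasurableSet.univ_pi (fun j => measurableSet_Ico)
  have hNR : (0:ℝ) < N := by exact_mod_cast hN
  -- the centering constants
  set c : Fin N → ℝ := fun i => (N : ℝ) * (volume (Ω i ∩ box)).toReal with hc
  set ξ : Fin N → S → ℝ := fun i s => (if X i s ∈ box then (1:ℝ) else 0) - c i with hξ
  have hvolfin : ∀ i, volume (Ω i ∩ box) ≠ ⊤ := by
    intro i
    have h1 : volume (Ω i ∩ box) ≤ volume (Ω i) := measure_mono Set.inter_subset_left
    rw [hΩvol i] at h1
    exact ne_top_of_le_ne_top (by simp [hN.ne']) h1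
  have hc01 : ∀ i, 0 ≤ c i ∧ c i ≤ 1 := by
    intro i
    constructor
    · exact mul_nonneg (le_of_lt hNR) ENNReal.toReal_nonneg
    · have h1 : volume (Ω i ∩ box) ≤ 1 / N := by
        rw [← hΩvol i]; exact measure_mono Set.inter_subset_left
      have h2 : (volume (Ω i ∩ box)).toReal ≤ ((1:ENNReal) / N).toReal :=
        ENNReal.toReal_mono (by simp [hN.ne']) h1
      have h3 : ((1:ENNReal) / N).toReal = 1 / (N:ℝ) := by
        rw [ENNReal.toReal_div]; simp
      rw [h3] at h2
      calc c i ≤ (N:ℝ) * (1 / N) := by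
            exact mul_le_mul_of_nonneg_left h2 (le_of_lt hNR)
        _ = 1 := by field_simp
  -- measurability
  have hξmeas : ∀ i, Measurable (ξ i) := by
    intro i
    apply Measurable.sub _ measurable_const
    exact Measurable.ite ((hXmeas i) hboxmeas) measurable_const measurable_const
  -- boundedness
  have hξbdd : ∀ i s, |ξ i s| ≤ 1 := by
    intro i s
    obtain ⟨h0, h1⟩ := hc01 i
    rw [hξ]
    simp only
    split_ifs with h
    · rw [abs_le]; constructor <;> linarith
    · rw [abs_le]; constructor <;> linarith
  -- centering
  have hcent : ∀ i, ∫ s, ξ i s = 0 := by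
    intro i
    have hind_eq : (fun s => if X i s ∈ box then (1:ℝ) else 0)
        = (X i ⁻¹' box).indicator (fun _ => (1:ℝ)) := by
      funext s
      simp [Set.indicator_apply, Set.mem_preimage]
    have hii : Integrable ((X i ⁻¹' box).indicator (fun _ => (1:ℝ))) volume :=
      (integrable_const (1:ℝ)).indicator ((hXmeas i) hboxmeas)
    have : ∫ s, ξ i s = (∫ s, (if X i s ∈ box then (1:ℝ) else 0)) - ∫ _s : S, c i := by
      rw [hξ]
      simp only
      rw [integral_sub (by rw [hind_eq]; exact hii) (integrable_const _)]
    rw [this]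
    rw [hind_eq, integral_indicator_const _ ((hXmeas i) hboxmeas)]
    have hmap : (volume : Measure S) (X i ⁻¹' box) = (N : ENNReal) * volume (Ω i ∩ box) := by
      have h1 : (volume : Measure S) (X i ⁻¹' box) = (Measure.map (X i) volume) box := by
        rw [Measure.map_apply (hXmeas i) hboxmeas]
      rw [h1, hXdist i, Measure.smul_apply, Measure.restrict_apply hboxmeas,
        Set.inter_comm, smul_eq_mul]
    rw [measureReal_def, hmap]
    rw [ENNReal.toReal_mul, ENNReal.toReal_natCast]
    simp [hc]
  -- independence
  have hξind : iIndepFun ξ volume := by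
    have := hXind.comp (fun i (x : Fin d → ℝ) => (if x ∈ box then (1:ℝ) else 0) - c i)
      (fun i => (Measurable.ite hboxmeas measurable_const measurable_const).sub measurable_const)
    exact this
  -- boundary cells
  set B : Finset (Fin N) := Finset.univ.filter (fun i =>
      (Ω i ∩ box).Nonempty ∧ ¬ Ω i ⊆ box) with hB
  have hzero : ∀ i ∉ B, ∀ s, ξ i s = 0 := by
    intro i hi s
    simp only [hB, Finset.mem_filter, Finset.mem_univ, true_and, not_and, not_not] at hi
    by_cases hne : (Ω i ∩ box).Nonempty
    · have hsub : Ω i ⊆ box := hi hne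
      have hi1 : (if X i s ∈ box then (1:ℝ) else 0) = 1 := if_pos (hsub (hXmem i s))
      have hi2 : Ω i ∩ box = Ω i := Set.inter_eq_left.mpr hsub
      have hc1 : c i = 1 := by
        rw [hc]
        simp only [hi2, hΩvol i]
        rw [ENNReal.toReal_div]
        simp
        field_simp
      rw [hξ]; simp only [hi1, hc1]; ring
    · have hie : Ω i ∩ box = ∅ := Set.not_nonempty_iff_eq_empty.mp hne
      have hi1 : (if X i s ∈ box then (1:ℝ) else 0) = 0 := by
        rw [if_neg]
        intro h
        exact hne ⟨X i s, hXmem i s, h⟩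
      have hc0 : c i = 0 := by rw [hc]; simp [hie]
      rw [hξ]; simp only [hi1, hc0]; ring
  -- the box has total measure equal to the sum over cells
  have hboxsub : box ⊆ Set.Icc (0 : Fin d → ℝ) 1 := by
    intro x hx
    rw [Set.mem_Icc]
    constructor <;> intro j
    · exact (hx j (Set.mem_univ j)).1
    · exact le_of_lt (lt_of_lt_of_le (hx j (Set.mem_univ j)).2 (hz.2 j))
  have hboxcup : box = ⋃ i, (Ω i ∩ box) := by
    ext x
    constructor
    · intro hx
      have : x ∈ ⋃ i, Ω i := by rw [hΩunion]; exact hboxsub hx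
      obtain ⟨i, hi⟩ := Set.mem_iUnion.mp this
      exact Set.mem_iUnion.mpr ⟨i, hi, hx⟩
    · rintro ⟨s, ⟨i, rfl⟩, _, hx⟩
      exact hx
  have hvolbox : volume box = ∑ i, volume (Ω i ∩ box) := by
    have hdisj2 : Pairwise (Function.onFun Disjoint (fun i => Ω i ∩ box)) :=
      fun i j hij => Disjoint.mono Set.inter_subset_left Set.inter_subset_left (hΩdisj hij)
    conv_lhs => rw [hboxcup]
    rw [measure_iUnion hdisj2 (fun i => (hΩmeas i).inter hboxmeas), tsum_fintype]
  have hsc : ∑ i, c i = (N:ℝ) * (volume box).toReal := by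
    rw [hc, ← Finset.mul_sum, hvolbox, ENNReal.toReal_sum (fun i _ => hvolfin i)]
  -- discrepancy identity
  have hD : ∀ s : S, (1 / (N:ℝ)) * (∑ i, if X i s ∈ box then (1:ℝ) else 0)
      - (volume box).toReal = (1 / (N:ℝ)) * ∑ i, ξ i s := by
    intro s
    have h1 : ∑ i, ξ i s = (∑ i, if X i s ∈ box then (1:ℝ) else 0) - ∑ i, c i := by
      rw [hξ]; rw [Finset.sum_sub_distrib]
    rw [h1, hsc, mul_sub]
    have : (1 / (N:ℝ)) * ((N:ℝ) * (volume box).toReal) = (volume box).toReal := by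
      field_simp
    rw [this]
  have heven : ∀ x : ℝ, |x| ^ (2*k) = x ^ (2*k) := fun x => (even_two_mul k).pow_abs x
  have hrw : ∀ s : S, |(1 / (N:ℝ)) * (∑ i, if X i s ∈ box then (1:ℝ) else 0)
      - (volume box).toReal| ^ (2*k)
      = (1 / (N:ℝ)) ^ (2*k) * (∑ i, ξ i s) ^ (2*k) := by
    intro s
    rw [hD s, heven, mul_pow]
  simp_rw [hrw]
  rw [integral_const_mul]
  have hb := lemB k hk ξ hξmeas hξbdd hcent hξind B hzero
  have hBM : ((B.card : ℝ)) ^ k ≤ (M : ℝ) ^ k := by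
    apply pow_le_pow_left₀ (Nat.cast_nonneg _)
    exact Nat.cast_le.mpr hM
  have h2 : ∫ s, (∑ i, ξ i s) ^ (2*k) ≤ (k : ℝ) ^ (2*k) * (M : ℝ) ^ k :=
    hb.trans (mul_le_mul_of_nonneg_left hBM (by positivity))
  have hpos : (0:ℝ) < (1 / (N:ℝ)) ^ (2*k) := by positivity
  calc (1 / (N:ℝ)) ^ (2*k) * ∫ s, (∑ i, ξ i s) ^ (2*k)
      ≤ (1 / (N:ℝ)) ^ (2*k) * ((k : ℝ) ^ (2*k) * (M : ℝ) ^ k) :=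
        mul_le_mul_of_nonneg_left h2 (le_of_lt hpos)
    _ = (k : ℝ) ^ (2*k) * (M : ℝ) ^ k / (N : ℝ) ^ (2*k) := by
        rw [div_pow, one_pow]
        field_simp

open ProbabilityTheory Finset in
lemma lemE {S : Type} [MeasureSpace S] [IsProbabilityMeasure (volume : Measure S)]
    {d : ℕ} (g : S → (Fin d → ℝ) → ℝ) (bound : ℝ) (hbound0 : 0 ≤ bound)
    (hgmeas : Measurable (Function.uncurry g))
    (hg0 : ∀ s z, 0 ≤ g s z)
    (hgbdd : ∀ s, ∀ z ∈ Set.Icc (0 : Fin d → ℝ) 1, g s z ≤ 1)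
    (hzb : ∀ z ∈ Set.Icc (0 : Fin d → ℝ) 1, ∫ s, g s z ≤ bound) :
    ∫ s, ∫ z in Set.Icc (0 : Fin d → ℝ) 1, g s z ≤ bound := by
  set t : Set (Fin d → ℝ) := Set.Icc 0 1 with ht
  have htmeas : MeasurableSet t := measurableSet_Icc
  have htvol : volume t = 1 := by
    rw [ht, ← Set.pi_univ_Icc, volume_pi_pi]
    simp [Real.volume_Icc]
  haveI : IsProbabilityMeasure (volume.restrict t) :=
    ⟨by rw [Measure.restrict_apply_univ]; exact htvol⟩
  have hgsz_meas : ∀ z, Measurable (fun s => g s z) :=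
    fun z => hgmeas.comp measurable_prodMk_right
  have hgs_meas : ∀ s, Measurable (fun z => g s z) :=
    fun s => hgmeas.comp measurable_prodMk_left
  have hgs_int : ∀ s, Integrable (fun z => g s z) (volume.restrict t) := by
    intro s
    refine (integrable_const (1:ℝ)).mono' (hgs_meas s).aestronglyMeasurable ?_
    rw [ae_restrict_iff' htmeas]
    exact Filter.Eventually.of_forall fun z hz => by
      rw [Real.norm_eq_abs, abs_of_nonneg (hg0 s z)]
      exact hgbdd s z hz
  have hgz_int : ∀ z ∈ t, Integrable (fun s => g s z) (volume : Measure S) := by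
    intro z hz
    refine (integrable_const (1:ℝ)).mono' (hgsz_meas z).aestronglyMeasurable ?_
    exact Filter.Eventually.of_forall fun s => by
      rw [Real.norm_eq_abs, abs_of_nonneg (hg0 s z)]
      exact hgbdd s z hz
  have hF0 : ∀ s, 0 ≤ ∫ z in t, g s z := fun s => integral_nonneg (fun z => hg0 s z)
  have hFmeas : AEStronglyMeasurable (fun s => ∫ z in t, g s z) (volume : Measure S) := by
    have := hgmeas.stronglyMeasurable.integral_prod_right' (ν := volume.restrict t)
    exact this.aestronglyMeasurable
  have step1 : ∫ s, ∫ z in t, g s z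
      = (∫⁻ s, ENNReal.ofReal (∫ z in t, g s z)).toReal :=
    integral_eq_lintegral_of_nonneg_ae (Filter.Eventually.of_forall hF0) hFmeas
  have step2 : ∀ s : S, ENNReal.ofReal (∫ z in t, g s z)
      = ∫⁻ z in t, ENNReal.ofReal (g s z) :=
    fun s => ofReal_integral_eq_lintegral_ofReal (hgs_int s)
      (Filter.Eventually.of_forall (fun z => hg0 s z))
  have step3 : (∫⁻ s, ∫⁻ z in t, ENNReal.ofReal (g s z))
      = ∫⁻ z in t, ∫⁻ s, ENNReal.ofReal (g s z) := by
    apply lintegral_lintegral_swap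
    exact (ENNReal.measurable_ofReal.comp hgmeas).aemeasurable
  have hDbound : ∀ z ∈ t, (∫⁻ s, ENNReal.ofReal (g s z)) ≤ ENNReal.ofReal bound := by
    intro z hz
    rw [← ofReal_integral_eq_lintegral_ofReal (hgz_int z hz)
      (Filter.Eventually.of_forall (fun s => hg0 s z))]
    exact ENNReal.ofReal_le_ofReal (hzb z hz)
  have step4 : (∫⁻ z in t, ∫⁻ s, ENNReal.ofReal (g s z)) ≤ ENNReal.ofReal bound := by
    calc (∫⁻ z in t, ∫⁻ s, ENNReal.ofReal (g s z))
        ≤ ∫⁻ z in t, ENNReal.ofReal bound := setLIntegral_mono' htmeas hDbound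
      _ = ENNReal.ofReal bound := by rw [setLIntegral_const, htvol, mul_one]
  calc ∫ s, ∫ z in t, g s z = (∫⁻ s, ENNReal.ofReal (∫ z in t, g s z)).toReal := step1
    _ = (∫⁻ z in t, ∫⁻ s, ENNReal.ofReal (g s z)).toReal := by
        rw [lintegral_congr step2, step3]
    _ ≤ (ENNReal.ofReal bound).toReal :=
        ENNReal.toReal_mono ENNReal.ofReal_ne_top step4
    _ = bound := ENNReal.toReal_ofReal hbound0

open ProbabilityTheory Finset in
/-- expected L_p-discrepancy bound for stratified input from an
equal-volume partition whose cells meet the boundary of any anchored box in at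
most M cells: E[L_p^p(D_N,x)] ≤ C_p · M^(p/2) / N^p for even p = 2k ≥ 2, with
C_p depending only on p. -/
theorem stmt_12 (k : ℕ) (hk : 1 ≤ k) :
    ∃ C : ℝ, 0 < C ∧
      ∀ (d N M : ℕ), 0 < N →
      ∀ (Ω : Fin N → Set (Fin d → ℝ)),
        (∀ i, MeasurableSet (Ω i)) →
        Pairwise (Function.onFun Disjoint Ω) →
        (⋃ i, Ω i = Set.Icc (0 : Fin d → ℝ) 1) →
        (∀ i, volume (Ω i) = 1 / N) →
        (∀ z ∈ Set.Icc (0 : Fin d → ℝ) 1,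
          (Finset.univ.filter (fun i =>
            (Ω i ∩ Set.univ.pi (fun j => Set.Ico 0 (z j))).Nonempty ∧
            ¬ Ω i ⊆ Set.univ.pi (fun j => Set.Ico 0 (z j)))).card ≤ M) →
      ∀ (S : Type) (_ : MeasureSpace S),
        IsProbabilityMeasure (volume : Measure S) →
      ∀ (X : Fin N → S → (Fin d → ℝ)),
        (∀ i, Measurable (X i)) →
        (∀ i s, X i s ∈ Ω i) →
        (∀ i, Measure.map (X i) volume = (N : ENNReal) • volume.restrict (Ω i)) →
        ProbabilityTheory.iIndepFun X volume →
        (∫ s, ∫ z in Set.Icc (0 : Fin d → ℝ) 1,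
            |(1 / N) * (∑ i, if X i s ∈ Set.univ.pi (fun j => Set.Ico 0 (z j))
                then (1 : ℝ) else 0)
              - (volume (Set.univ.pi (fun j => Set.Ico 0 (z j)))).toReal| ^ (2 * k))
          ≤ C * (M : ℝ) ^ k / (N : ℝ) ^ (2 * k) := by
  classical
  have hkR : (0:ℝ) < (k:ℝ) := by exact_mod_cast hk
  refine ⟨(k : ℝ) ^ (2*k), by positivity, ?_⟩
  intro d N M hN Ω hΩmeas hΩdisj hΩunion hΩvol hMz S mS hPS X hXmeas hXmem hXdist hXind
  have hNR : (0:ℝ) < N := by exact_mod_cast hN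
  -- measurability of the volume function
  have hvformula : (fun z : Fin d → ℝ =>
      (volume (Set.univ.pi fun j => Set.Ico 0 (z j))).toReal)
      = fun z => ∏ j, max (z j) 0 := by
    funext z
    rw [volume_pi_pi, ENNReal.toReal_prod]
    refine Finset.prod_congr rfl (fun j _ => ?_)
    rw [Real.volume_Ico, sub_zero, ENNReal.toReal_ofReal']
  have hvmeas : Measurable (fun z : Fin d → ℝ =>
      (volume (Set.univ.pi fun j => Set.Ico 0 (z j))).toReal) := by
    rw [hvformula]
    exact Finset.measurable_prod _ fun j _ => (measurable_pi_apply j).max measurable_const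
  have hAmeas : ∀ i : Fin N, MeasurableSet {p : S × (Fin d → ℝ) |
      X i p.1 ∈ Set.univ.pi (fun j => Set.Ico 0 (p.2 j))} := by
    intro i
    have heq : {p : S × (Fin d → ℝ) | X i p.1 ∈ Set.univ.pi (fun j => Set.Ico 0 (p.2 j))}
        = ⋂ j, {p : S × (Fin d → ℝ) | 0 ≤ X i p.1 j} ∩ {p | X i p.1 j < p.2 j} := by
      ext p
      simp [Set.mem_univ_pi, Set.mem_Ico, Set.mem_iInter, forall_and]
    rw [heq]
    refine MeasurableSet.iInter (fun j => MeasurableSet.inter ?_ ?_)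
    · exact measurableSet_le measurable_const
        ((measurable_pi_apply j).comp ((hXmeas i).comp measurable_fst))
    · exact measurableSet_lt ((measurable_pi_apply j).comp ((hXmeas i).comp measurable_fst))
        ((measurable_pi_apply j).comp measurable_snd)
  apply lemE (fun s z => |(1 / (N:ℝ)) * (∑ i, if X i s ∈ Set.univ.pi
        (fun j => Set.Ico 0 (z j)) then (1 : ℝ) else 0)
      - (volume (Set.univ.pi (fun j => Set.Ico 0 (z j)))).toReal| ^ (2 * k))
  · positivity
  · -- joint measurability
    apply Measurable.pow_const
    apply Measurable.abs
    apply Measurable.sub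
    · apply Measurable.const_mul
      apply Finset.measurable_sum
      intro i _
      exact Measurable.ite (hAmeas i) measurable_const measurable_const
    · exact hvmeas.comp measurable_snd
  · intro s z
    positivity
  · -- bounded by 1 on the unit cube
    intro s z hz
    have hboxsub : (Set.univ.pi fun j => Set.Ico 0 (z j)) ⊆ Set.Icc (0 : Fin d → ℝ) 1 := by
      intro x hx
      rw [Set.mem_Icc]
      constructor <;> intro j
      · exact (hx j (Set.mem_univ j)).1
      · exact le_of_lt (lt_of_lt_of_le (hx j (Set.mem_univ j)).2 (hz.2 j))
    have htvol : volume (Set.Icc (0 : Fin d → ℝ) 1) = 1 := by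
      rw [← Set.pi_univ_Icc, volume_pi_pi]
      simp [Real.volume_Icc]
    have hv0 : (0:ℝ) ≤ (volume (Set.univ.pi fun j => Set.Ico 0 (z j))).toReal :=
      ENNReal.toReal_nonneg
    have hv1 : (volume (Set.univ.pi fun j => Set.Ico 0 (z j))).toReal ≤ 1 := by
      have h := measure_mono (μ := (volume : Measure (Fin d → ℝ))) hboxsub
      rw [htvol] at h
      calc (volume (Set.univ.pi fun j => Set.Ico 0 (z j))).toReal
          ≤ (1 : ENNReal).toReal := ENNReal.toReal_mono (by simp) h
        _ = 1 := by simp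
    have hs0 : (0:ℝ) ≤ (1 / (N:ℝ)) * (∑ i, if X i s ∈ Set.univ.pi
        (fun j => Set.Ico 0 (z j)) then (1 : ℝ) else 0) := by
      apply mul_nonneg (by positivity)
      apply Finset.sum_nonneg
      intro i _
      split_ifs <;> norm_num
    have hs1 : (1 / (N:ℝ)) * (∑ i, if X i s ∈ Set.univ.pi
        (fun j => Set.Ico 0 (z j)) then (1 : ℝ) else 0) ≤ 1 := by
      have hsum : (∑ i, if X i s ∈ Set.univ.pi
          (fun j => Set.Ico 0 (z j)) then (1 : ℝ) else 0) ≤ N := by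
        calc (∑ i : Fin N, if X i s ∈ Set.univ.pi
            (fun j => Set.Ico 0 (z j)) then (1 : ℝ) else 0)
            ≤ ∑ _i : Fin N, (1:ℝ) := Finset.sum_le_sum (fun i _ => by split_ifs <;> norm_num)
          _ = N := by simp
      calc (1 / (N:ℝ)) * (∑ i, if X i s ∈ Set.univ.pi
          (fun j => Set.Ico 0 (z j)) then (1 : ℝ) else 0)
          ≤ (1 / (N:ℝ)) * N := mul_le_mul_of_nonneg_left hsum (by positivity)
        _ = 1 := by field_simp
    apply pow_le_one₀ (abs_nonneg _)
    rw [abs_le]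
    constructor <;> linarith
  · -- the pointwise-in-z bound from lemD
    intro z hz
    exact lemD k hk d N M hN Ω hΩmeas hΩdisj hΩunion hΩvol S mS hPS X hXmeas hXmem hXdist
      hXind z hz (hMz z hz)
end
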